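/- For positive integers n, k, m with k < n, one has ∑_{ν=k}^{n−1} ∫_{1/(ν+1)}^{1/ν} x^m (1−kx)^{n−2} dx = ∑_{μ=0}^{m} (1/k^{μ+1}) · (m!(n−2)!)/((m−μ)!(n+μ−1)!) · (n−k)^{n+μ−1}/n^{n+m−1}. -/

import Mathlib

/-! The integrals over `[1/(ν+1), 1/ν]` telescope to a single integral over `[1/n, 1/k]`.
Since `1 - kx` vanishes at the upper end `1/k`, integrating by parts `m` times (lowering the
power of `x`, raising that of `1 - kx`) leaves only boundary terms at `1/n`, one per step. -/

open Finset

theorem sum_Ico_integral_adjacent_intervals_rev {E : Type*} [NormedAddCommGroup E]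
    [NormedSpace ℝ E] {f : ℝ → E} (hf : Continuous f) (a : ℕ → ℝ) {k N : ℕ} (hkN : k ≤ N) :
    ∑ ν ∈ Ico k N, ∫ x in a (ν + 1)..a ν, f x = ∫ x in a N..a k, f x := by
  rw [intervalIntegral.integral_symm, ← intervalIntegral.sum_integral_adjacent_intervals_Ico hkN
    fun _ _ => hf.intervalIntegrable _ _, ← sum_neg_distrib]
  exact sum_congr rfl fun ν _ => intervalIntegral.integral_symm _ _

theorem hasDerivAt_one_sub_mul_pow_succ_div {c : ℝ} (hc : c ≠ 0) (p : ℕ) (x : ℝ) :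
    HasDerivAt (fun y => -((1 - c * y) ^ (p + 1) / (c * (p + 1)))) ((1 - c * x) ^ p) x := by
  have h : HasDerivAt (fun y => 1 - c * y) (-c) x := by
    simpa using ((hasDerivAt_id x).const_mul c).const_sub 1
  refine ((h.pow (p + 1)).div_const _).neg.congr_deriv ?_
  have : (p : ℝ) + 1 ≠ 0 := by positivity
  push_cast
  field_simp

theorem integral_one_sub_mul_pow {c : ℝ} (hc : c ≠ 0) (a : ℝ) (p : ℕ) :
    ∫ x in a..1 / c, (1 - c * x) ^ p = (1 - c * a) ^ (p + 1) / (c * (p + 1)) := by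
  rw [intervalIntegral.integral_eq_sub_of_hasDerivAt
    (fun x _ => hasDerivAt_one_sub_mul_pow_succ_div hc p x)
    (Continuous.intervalIntegrable (by fun_prop) _ _)]
  simp [hc]

theorem integral_pow_succ_mul_one_sub_mul_pow {c : ℝ} (hc : c ≠ 0) (a : ℝ) (m p : ℕ) :
    ∫ x in a..1 / c, x ^ (m + 1) * (1 - c * x) ^ p =
      a ^ (m + 1) * (1 - c * a) ^ (p + 1) / (c * (p + 1)) +
        (m + 1) / (c * (p + 1)) * ∫ x in a..1 / c, x ^ m * (1 - c * x) ^ (p + 1) := by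
  rw [intervalIntegral.integral_mul_deriv_eq_deriv_mul
    (fun x _ => by simpa using hasDerivAt_pow (m + 1) x)
    (fun x _ => hasDerivAt_one_sub_mul_pow_succ_div hc p x)
    (Continuous.intervalIntegrable (by fun_prop) _ _)
    (Continuous.intervalIntegrable (by fun_prop) _ _),
    show (fun x => (m + 1 : ℝ) * x ^ m * -((1 - c * x) ^ (p + 1) / (c * (p + 1)))) =
      fun x => -((m + 1) / (c * (p + 1)) * (x ^ m * (1 - c * x) ^ (p + 1))) by ext; ring,
    intervalIntegral.integral_neg, intervalIntegral.integral_const_mul, one_div,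
    mul_inv_cancel₀ hc, sub_self, zero_pow (Nat.succ_ne_zero p)]
  ring

theorem integral_pow_mul_one_sub_mul_pow {c : ℝ} (hc : c ≠ 0) (a : ℝ) (m p : ℕ) :
    ∫ x in a..1 / c, x ^ m * (1 - c * x) ^ p =
      ∑ μ ∈ range (m + 1), 1 / c ^ (μ + 1) *
        ((m.factorial * p.factorial : ℝ) / ((m - μ).factorial * (p + μ + 1).factorial)) *
          (a ^ (m - μ) * (1 - c * a) ^ (p + μ + 1)) := by
  induction m generalizing p with
  | zero =>
    simp only [pow_zero, one_mul, integral_one_sub_mul_pow hc, zero_add, sum_range_one]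
    push_cast [Nat.factorial_succ]
    field_simp
  | succ m ih =>
    rw [integral_pow_succ_mul_one_sub_mul_pow hc, ih, sum_range_succ' _ (m + 1), mul_sum, add_comm]
    congr 1
    · refine sum_congr rfl fun μ _ => ?_
      rw [Nat.succ_sub_succ, show p + (μ + 1) + 1 = p + 1 + μ + 1 by ring]
      push_cast [Nat.factorial_succ]
      field_simp
      ring
    · push_cast [Nat.factorial_succ]
      field_simp

theorem sum_integral_x_pow_mul_one_sub_kx_pow_general
    (n k m : ℕ) (hk : 0 < k) (hkn : k < n) :
    ∑ ν ∈ Finset.Icc k (n - 1),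
        ∫ x in (1 / ((ν : ℝ) + 1))..(1 / (ν : ℝ)), x ^ m * (1 - k * x) ^ (n - 2) =
      ∑ μ ∈ Finset.range (m + 1),
        (1 / (k : ℝ) ^ (μ + 1)) *
          ((m.factorial * (n - 2).factorial : ℝ) /
            ((m - μ).factorial * (n + μ - 1).factorial)) *
          (((n : ℝ) - k) ^ (n + μ - 1) / (n : ℝ) ^ (n + m - 1)) := by
  have hn : (n : ℝ) ≠ 0 := Nat.cast_ne_zero.mpr (by omega)
  have htelescope := sum_Ico_integral_adjacent_intervals_rev
    (f := fun x : ℝ => x ^ m * (1 - k * x) ^ (n - 2)) (by fun_prop) (fun ν : ℕ => 1 / (ν : ℝ))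
    hkn.le
  push_cast at htelescope
  rw [Icc_sub_one_right_eq_Ico_of_not_isMin (by simp; omega), htelescope,
    integral_pow_mul_one_sub_mul_pow (by positivity)]
  refine sum_congr rfl fun μ hμ => ?_
  have hμm : μ ≤ m := Nat.lt_succ_iff.mp (mem_range.mp hμ)
  rw [show n - 2 + μ + 1 = n + μ - 1 by omega]
  congr 1
  rw [show 1 - k * (1 / n : ℝ) = (n - k) / n by field_simp, div_pow, div_pow, one_pow,
    ← show m - μ + (n + μ - 1) = n + m - 1 by omega, pow_add]
  field_simp

/-- **Lemma 2.** For positive integers `n`, `k < n` and `m`,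
`∑_{ν=k}^{n-1} ∫_{1/(ν+1)}^{1/ν} x^m (1-kx)^(n-2) dx
  = ∑_{μ=0}^m (1/k^{μ+1}) (m!(n-2)!)/((m-μ)!(n+μ-1)!) (n-k)^{n+μ-1}/n^{n+m-1}`. -/
theorem sum_integral_x_pow_mul_one_sub_kx_pow
    (n k m : ℕ) (hn : 0 < n) (hk : 0 < k) (hm : 0 < m) (hkn : k < n) :
    ∑ ν ∈ Finset.Icc k (n - 1),
        ∫ x in (1 / ((ν : ℝ) + 1))..(1 / (ν : ℝ)), x ^ m * (1 - k * x) ^ (n - 2) =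
      ∑ μ ∈ Finset.range (m + 1),
        (1 / (k : ℝ) ^ (μ + 1)) *
          ((m.factorial * (n - 2).factorial : ℝ) /
            ((m - μ).factorial * (n + μ - 1).factorial)) *
          (((n : ℝ) - k) ^ (n + μ - 1) / (n : ℝ) ^ (n + m - 1)) :=
  sum_integral_x_pow_mul_one_sub_kx_pow_general n k m hk hkn
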